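/- Let δ, p : ℝ → ℝ be bounded, continuous and almost automorphic functions with δ(t) > 0 and p(t) > 0 for all t ∈ ℝ, and suppose δ is ergodic with mean M(δ) > 0. Let τ > 0. Then there exists γ₀ > 0, depending only on δ, p and τ, such that for every nonnegative Lipschitz function g : ℝ → ℝ with Lipschitz constant γ ≤ γ₀, the delayed equation y'(t) = −δ(t)·y(t) + p(t)·g(y(t−τ)) has exactly one bounded almost automorphic differentiable solution y : ℝ → ℝ. -/

import Mathlib

open MeasureTheory Filter Topology

/-- A continuous function `ψ : ℝ → V` into a Banach space is almost automorphic if for every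
sequence of reals there is a subsequence `(τₙ)` and a function `ψ̃` with
`ψ(t+τₙ) → ψ̃(t)` and `ψ̃(t−τₙ) → ψ(t)` pointwise on `ℝ`. -/
def AlmostAutomorphic {V : Type*} [NormedAddCommGroup V] (ψ : ℝ → V) : Prop :=
  Continuous ψ ∧ ∀ σ : ℕ → ℝ, ∃ k : ℕ → ℕ, StrictMono k ∧ ∃ ψt : ℝ → V,
    (∀ t : ℝ, Tendsto (fun n => ψ (t + σ (k n))) atTop (𝓝 (ψt t))) ∧
    (∀ t : ℝ, Tendsto (fun n => ψt (t - σ (k n))) atTop (𝓝 (ψ t)))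

/-- A bounded continuous function `f : ℝ → ℝ` is ergodic with mean `M` if
`(1/(2T)) ∫_{−T+ξ}^{T+ξ} f(s) ds → M` as `T → ∞`, uniformly with respect to `ξ ∈ ℝ`. -/
def ErgodicMeanR (f : ℝ → ℝ) (M : ℝ) : Prop :=
  ∀ ε > 0, ∃ T₁ > (0 : ℝ), ∀ T ≥ T₁, ∀ ξ : ℝ,
    |(2 * T)⁻¹ * (∫ s in (-T + ξ)..(T + ξ), f s) - M| < ε

/-!
Bounded solutions of `y' = -δ y + p g(y(t - τ))` are exactly the fixed points of
`u ↦ ∫_{-∞}^t exp (-∫ₛᵗ δ) p(s) g(u(s - τ)) ds`. Since `δ` is bounded with positive mean,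
`∫ₛᵗ δ ≥ a (t - s) - b` for some `a > 0`, so the kernel is at most `Bp eᵇ e^{-a (t - s)}` and the
operator is a contraction of `ℝ →ᵇ ℝ` with constant `γ Bp eᵇ / a`: this gives existence and
uniqueness. The fixed point commutes with translations of `(δ, p)` and depends continuously on
`(δ, p)` under bounded pointwise convergence (the Picard iterates converge uniformly in the
coefficients, and each of them converges by dominated convergence). Hence the limit functions
witnessing the almost automorphy of `δ` and `p` along a subsequence produce, through the fixed
point for the limit coefficients, the witness for the solution.
-/

open Real Set Filter Topology MeasureTheory BoundedContinuousFunction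
open scoped NNReal

lemma integrableOn_exp_mul_sub_Iic {a : ℝ} (ha : 0 < a) (t : ℝ) :
    IntegrableOn (fun s => exp (a * (s - t))) (Iic t) := by
  refine IntegrableOn.congr_fun ((integrableOn_exp_mul_Iic ha t).div_const (exp (a * t)))
    (fun s _ => ?_) measurableSet_Iic
  rw [mul_sub, exp_sub]

lemma integral_exp_mul_sub_Iic {a : ℝ} (ha : 0 < a) (t : ℝ) :
    ∫ s in Iic t, exp (a * (s - t)) = a⁻¹ := by
  simp_rw [mul_sub, exp_sub]
  rw [integral_div, integral_exp_mul_Iic ha]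
  field_simp

lemma integrableOn_Iic_of_abs_le_exp {f : ℝ → ℝ} {a C t : ℝ} (ha : 0 < a)
    (hf : AEStronglyMeasurable f (volume.restrict (Iic t)))
    (hle : ∀ s ≤ t, |f s| ≤ C * exp (a * (s - t))) : IntegrableOn f (Iic t) :=
  ((integrableOn_exp_mul_sub_Iic ha t).const_mul C).mono' hf <|
    (ae_restrict_iff' measurableSet_Iic).2 (ae_of_all _ fun s hs => hle s hs)

lemma abs_setIntegral_Iic_le_of_abs_le_exp {f : ℝ → ℝ} {a C t : ℝ} (ha : 0 < a)
    (hle : ∀ s ≤ t, |f s| ≤ C * exp (a * (s - t))) : |∫ s in Iic t, f s| ≤ C / a := by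
  calc |∫ s in Iic t, f s|
      ≤ ∫ s in Iic t, C * exp (a * (s - t)) :=
        norm_integral_le_of_norm_le (f := f) ((integrableOn_exp_mul_sub_Iic ha t).const_mul C)
          ((ae_restrict_iff' measurableSet_Iic).2 (ae_of_all _ fun s hs => hle s hs))
    _ = C / a := by rw [integral_const_mul, integral_exp_mul_sub_Iic ha, div_eq_mul_inv]

lemma setIntegral_Iic_comp_add_right (f : ℝ → ℝ) (t c : ℝ) :
    ∫ s in Iic t, f (s + c) = ∫ s in Iic (t + c), f s := by
  have := (measurePreserving_add_right volume c).setIntegral_preimage_emb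
    (MeasurableEquiv.addRight c).measurableEmbedding f (Iic (t + c))
  rwa [show (· + c) ⁻¹' Iic (t + c) = Iic t by ext; simp] at this

lemma integral_Iic_eq_add_intervalIntegral {f : ℝ → ℝ} (hf : ∀ t, IntegrableOn f (Iic t))
    (t₀ t : ℝ) : ∫ s in Iic t, f s = (∫ s in Iic t₀, f s) + ∫ s in t₀..t, f s := by
  rw [← intervalIntegral.integral_Iic_sub_Iic (hf t₀) (hf t)]
  ring

lemma intervalIntegrable_of_integrableOn_Iic {f : ℝ → ℝ} (hf : ∀ t, IntegrableOn f (Iic t))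
    (x y : ℝ) : IntervalIntegrable f volume x y :=
  (intervalIntegrable_iff.2 ((hf (max x y)).mono_set fun _ hs => hs.2.trans (by simp)))

lemma continuous_integral_Iic {f : ℝ → ℝ} (hf : ∀ t, IntegrableOn f (Iic t)) :
    Continuous fun t => ∫ s in Iic t, f s := by
  rw [funext (integral_Iic_eq_add_intervalIntegral hf 0)]
  exact continuous_const.add
    (intervalIntegral.continuous_primitive (intervalIntegrable_of_integrableOn_Iic hf) 0)

lemma hasDerivAt_integral_Iic {f : ℝ → ℝ} (hf : ∀ t, IntegrableOn f (Iic t)) {t : ℝ}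
    (hft : ContinuousAt f t) : HasDerivAt (fun x => ∫ s in Iic x, f s) (f t) t := by
  rw [funext (integral_Iic_eq_add_intervalIntegral hf t)]
  refine (intervalIntegral.integral_hasDerivAt_right
    (intervalIntegrable_of_integrableOn_Iic hf t t) ?_ hft).const_add (∫ s in Iic t, f s)
  exact AEStronglyMeasurable.stronglyMeasurableAtFilter_of_mem (hf (t + 1)).aestronglyMeasurable
    (Iic_mem_nhds (lt_add_one t))

lemma tendsto_intervalIntegral_of_tendsto {F : ℕ → ℝ → ℝ} {f : ℝ → ℝ} {B : ℝ}
    (hm : ∀ n, Measurable (F n)) (hB : ∀ n x, |F n x| ≤ B)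
    (hF : ∀ x, Tendsto (fun n => F n x) atTop (𝓝 (f x))) (s t : ℝ) :
    Tendsto (fun n => ∫ x in s..t, F n x) atTop (𝓝 (∫ x in s..t, f x)) :=
  intervalIntegral.tendsto_integral_filter_of_dominated_convergence (fun _ => B)
    (Eventually.of_forall fun n => (hm n).aestronglyMeasurable.restrict)
    (Eventually.of_forall fun n => ae_of_all _ fun x _ => hB n x) intervalIntegrable_const
    (ae_of_all _ fun x _ => hF x)

lemma ErgodicMeanR.exists_integral_ge {f : ℝ → ℝ} {M B : ℝ} (hf : ErgodicMeanR f M)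
    (hB : ∀ t, |f t| ≤ B) {a : ℝ} (ha : a < M) :
    ∃ b, ∀ s t, s ≤ t → a * (t - s) - b ≤ ∫ u in s..t, f u := by
  obtain ⟨T, hT, hmean⟩ := hf (M - a) (sub_pos.2 ha)
  refine ⟨2 * T * (|a| + B), fun s t hst => ?_⟩
  have hB0 : 0 ≤ B := (abs_nonneg _).trans (hB 0)
  rcases le_or_gt (2 * T) (t - s) with hlong | hshort
  · -- on a long interval, the mean of `f` exceeds `a`
    have h := hmean ((t - s) / 2) (by linarith) ((s + t) / 2)
    rw [show -((t - s) / 2) + (s + t) / 2 = s by ring, show (t - s) / 2 + (s + t) / 2 = t by ring,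
      show 2 * ((t - s) / 2) = t - s by ring] at h
    have hlt : a < (t - s)⁻¹ * ∫ u in s..t, f u := by linarith [(abs_lt.1 h).1]
    have hts : 0 < t - s := by linarith
    rw [inv_mul_eq_div, lt_div_iff₀ hts] at hlt
    nlinarith [abs_nonneg a]
  · have h := intervalIntegral.norm_integral_le_of_norm_le_const (a := s) (b := t)
      (f := f) (fun x _ => hB x)
    rw [Real.norm_eq_abs, abs_of_nonneg (sub_nonneg.2 hst)] at h
    nlinarith [neg_abs_le (∫ u in s..t, f u), le_abs_self a, neg_abs_le a]

lemma ContractingWith.tendsto_fixedPoint_apply {α E : Type*} [TopologicalSpace α]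
    [NormedAddCommGroup E] [CompleteSpace E] {q : ℝ≥0} {f : ℕ → (α →ᵇ E) → α →ᵇ E}
    {F : (α →ᵇ E) → α →ᵇ E} (hf : ∀ n, ContractingWith q (f n)) (hF : ContractingWith q F)
    {x₀ : α →ᵇ E} {C : ℝ} (hfC : ∀ n, dist x₀ (f n x₀) ≤ C) (hFC : dist x₀ (F x₀) ≤ C)
    (hiter : ∀ k t, Tendsto (fun n => (f n)^[k] x₀ t) atTop (𝓝 (F^[k] x₀ t))) (t : α) :
    Tendsto (fun n => fixedPoint (f n) (hf n) t) atTop (𝓝 (fixedPoint F hF t)) := by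
  rw [Metric.tendsto_atTop]
  intro ε hε
  have hq : (0 : ℝ) < 1 - q := sub_pos.2 hF.1
  have hgeom : Tendsto (fun k : ℕ => C * (q : ℝ) ^ k / (1 - q)) atTop (𝓝 0) := by
    simpa using ((tendsto_pow_atTop_nhds_zero_of_lt_one q.2 hF.1).const_mul C).div_const (1 - q)
  obtain ⟨k, hk⟩ := (hgeom.eventually (gt_mem_nhds (by positivity : 0 < ε / 3))).exists
  obtain ⟨N, hN⟩ := Metric.tendsto_atTop.1 (hiter k t) (ε / 3) (by positivity)
  refine ⟨N, fun n hn => ?_⟩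
  -- the `k`-th iterates approximate both fixed points uniformly in `n`
  have hfn : dist ((f n)^[k] x₀) (fixedPoint (f n) (hf n)) < ε / 3 :=
    ((hf n).apriori_dist_iterate_fixedPoint_le x₀ k).trans_lt <|
      lt_of_le_of_lt (by gcongr; exact hfC n) hk
  have hF' : dist (F^[k] x₀) (fixedPoint F hF) < ε / 3 :=
    (hF.apriori_dist_iterate_fixedPoint_le x₀ k).trans_lt <|
      lt_of_le_of_lt (by gcongr) hk
  calc dist (fixedPoint (f n) (hf n) t) (fixedPoint F hF t)
      ≤ dist (fixedPoint (f n) (hf n) t) ((f n)^[k] x₀ t) + dist ((f n)^[k] x₀ t) (F^[k] x₀ t)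
          + dist (F^[k] x₀ t) (fixedPoint F hF t) := dist_triangle4 _ _ _ _
    _ < ε / 3 + ε / 3 + ε / 3 := by
        gcongr
        · exact (dist_coe_le_dist t).trans_lt (by rwa [dist_comm])
        · exact hN n hn
        · exact (dist_coe_le_dist t).trans_lt hF'
    _ = ε := by ring

lemma LipschitzWith.abs_le_add_mul_abs {g : ℝ → ℝ} {γ : ℝ≥0} (hg : LipschitzWith γ g) (x : ℝ) :
    |g x| ≤ |g 0| + γ * |x| := by
  have := hg.dist_le_mul x 0
  rw [Real.dist_eq, Real.dist_eq, sub_zero] at this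
  linarith [abs_sub_abs_le_abs_sub (g x) (g 0)]

lemma hasDerivAt_exp_mul_iff {y D : ℝ → ℝ} {d h t : ℝ} (hD : HasDerivAt D d t) :
    HasDerivAt (fun s => exp (D s) * y s) (exp (D t) * h) t ↔
      HasDerivAt y (-d * y t + h) t := by
  have hE : HasDerivAt (fun s => exp (D s)) (exp (D t) * d) t := hD.exp
  constructor
  · intro hy
    have hE' : HasDerivAt (fun s => exp (-D s)) (exp (-D t) * -d) t := hD.neg.exp
    refine ((hE'.mul hy).congr_of_eventuallyEq (Eventually.of_forall fun s => ?_)).congr_deriv ?_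
    · simp [← mul_assoc, ← exp_add]
    · rw [exp_neg]
      field_simp
  · intro hy
    exact (hE.mul hy).congr_deriv (by ring)

/-- The data of `y' = -δ y + p g(y(t - τ))` other than the coefficients, which range over
`DelaySetup.Coeffs` so that translates and pointwise limits of `(δ, p)` share these constants.
`Bp eᵇ / a` bounds the operator `DelaySetup.Coeffs.volterra`. -/
structure DelaySetup where
  a : ℝ
  b : ℝ
  Bδ : ℝ
  Bp : ℝ≥0
  τ : ℝ
  g : ℝ → ℝ
  γ : ℝ≥0
  a_pos : 0 < a
  lipschitzWith_g : LipschitzWith γ g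
  contraction : Bp * exp b / a * γ < 1

noncomputable section

namespace DelaySetup

variable (S : DelaySetup)

def K : ℝ≥0 := ⟨S.Bp * exp S.b / S.a, div_nonneg (by positivity) S.a_pos.le⟩

lemma coe_K : (S.K : ℝ) = S.Bp * exp S.b / S.a := rfl

lemma K_mul_γ_lt_one : S.K * S.γ < 1 := by
  rw [← NNReal.coe_lt_coe]
  exact S.contraction

def delayTerm (u : ℝ →ᵇ ℝ) : ℝ →ᵇ ℝ :=
  (u.compContinuous ⟨fun t => t - S.τ, by fun_prop⟩).comp S.g S.lipschitzWith_g

@[simp]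
lemma delayTerm_apply (u : ℝ →ᵇ ℝ) (t : ℝ) : S.delayTerm u t = S.g (u (t - S.τ)) := rfl

lemma lipschitzWith_delayTerm : LipschitzWith S.γ S.delayTerm := by
  have h := (lipschitz_comp S.lipschitzWith_g).comp
    (lipschitz_compContinuous (β := ℝ) ⟨fun t => t - S.τ, by fun_prop⟩)
  rwa [mul_one] at h

lemma norm_delayTerm_le (u : ℝ →ᵇ ℝ) : ‖S.delayTerm u‖ ≤ |S.g 0| + S.γ * ‖u‖ :=
  (norm_le (by positivity)).2 fun t =>
    (S.lipschitzWith_g.abs_le_add_mul_abs _).trans (by gcongr; exact norm_coe_le_norm u _)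

structure Coeffs where
  δ : ℝ → ℝ
  p : ℝ → ℝ
  measurable_δ : Measurable δ
  measurable_p : Measurable p
  abs_δ_le : ∀ t, |δ t| ≤ S.Bδ
  abs_p_le : ∀ t, |p t| ≤ S.Bp
  integral_δ_ge : ∀ s t, s ≤ t → S.a * (t - s) - S.b ≤ ∫ r in s..t, δ r

namespace Coeffs

section

variable {S} (A : S.Coeffs)

lemma intervalIntegrable_δ (x y : ℝ) : IntervalIntegrable A.δ volume x y :=
  intervalIntegrable_const.mono_fun' A.measurable_δ.aestronglyMeasurable
    (ae_of_all _ A.abs_δ_le)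

def primitive (t : ℝ) : ℝ := ∫ r in (0 : ℝ)..t, A.δ r

lemma primitive_sub_primitive (s t : ℝ) : A.primitive t - A.primitive s = ∫ r in s..t, A.δ r :=
  intervalIntegral.integral_interval_sub_left (A.intervalIntegrable_δ 0 t)
    (A.intervalIntegrable_δ 0 s)

lemma continuous_primitive : Continuous A.primitive :=
  intervalIntegral.continuous_primitive A.intervalIntegrable_δ 0

lemma hasDerivAt_primitive {t : ℝ} (hδ : ContinuousAt A.δ t) :
    HasDerivAt A.primitive (A.δ t) t :=
  intervalIntegral.integral_hasDerivAt_right (A.intervalIntegrable_δ 0 t)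
    A.measurable_δ.aestronglyMeasurable.stronglyMeasurableAtFilter hδ

lemma tendsto_exp_primitive_atBot : Tendsto (fun r => exp (A.primitive r)) atBot (𝓝 0) := by
  refine tendsto_exp_atBot.comp (tendsto_atBot_mono' _ ?_
    (tendsto_atBot_add_const_left _ (A.primitive 0 + S.b)
      (tendsto_id.const_mul_atBot S.a_pos)))
  filter_upwards [Iic_mem_atBot 0] with r hr
  have := A.integral_δ_ge r 0 hr
  rw [← A.primitive_sub_primitive] at this
  simp only [id]
  linarith

def kernel (t s : ℝ) : ℝ := exp (A.primitive s - A.primitive t) * A.p s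

lemma abs_kernel_le {s t : ℝ} (h : s ≤ t) :
    |A.kernel t s| ≤ S.Bp * exp S.b * exp (S.a * (s - t)) := by
  have hD := A.integral_δ_ge s t h
  rw [← A.primitive_sub_primitive] at hD
  rw [kernel, abs_mul, abs_exp, mul_comm, mul_assoc]
  gcongr
  · exact A.abs_p_le s
  · rw [← exp_add]
    gcongr
    linarith

lemma measurable_kernel (t : ℝ) : Measurable (A.kernel t) :=
  ((continuous_exp.comp (A.continuous_primitive.sub continuous_const)).measurable).mul
    A.measurable_p

lemma exp_primitive_mul_kernel (t s : ℝ) :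
    exp (A.primitive t) * A.kernel t s = exp (A.primitive s) * A.p s := by
  rw [kernel, ← mul_assoc, ← exp_add, add_sub_cancel]

/-- The bounded solution of `y' = -δ y + p w`. -/
def volterra (w : ℝ → ℝ) (t : ℝ) : ℝ := ∫ s in Iic t, A.kernel t s * w s

lemma abs_kernel_mul_le (w : ℝ →ᵇ ℝ) {s t : ℝ} (h : s ≤ t) :
    |A.kernel t s * w s| ≤ S.Bp * exp S.b * ‖w‖ * exp (S.a * (s - t)) := by
  rw [abs_mul, mul_right_comm]
  gcongr
  · exact A.abs_kernel_le h
  · exact norm_coe_le_norm w s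

lemma integrableOn_kernel_mul (w : ℝ →ᵇ ℝ) (t : ℝ) :
    IntegrableOn (fun s => A.kernel t s * w s) (Iic t) :=
  integrableOn_Iic_of_abs_le_exp S.a_pos
    ((A.measurable_kernel t).mul w.continuous.measurable).aestronglyMeasurable
    fun _ => A.abs_kernel_mul_le w

lemma abs_volterra_le (w : ℝ →ᵇ ℝ) (t : ℝ) : |A.volterra w t| ≤ S.K * ‖w‖ := by
  rw [S.coe_K, div_mul_eq_mul_div]
  exact abs_setIntegral_Iic_le_of_abs_le_exp S.a_pos fun _ => A.abs_kernel_mul_le w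

lemma volterra_sub (w v : ℝ →ᵇ ℝ) (t : ℝ) :
    A.volterra w t - A.volterra v t = A.volterra ⇑(w - v) t := by
  rw [volterra, volterra, volterra, ← integral_sub (A.integrableOn_kernel_mul w t)
    (A.integrableOn_kernel_mul v t)]
  simp [mul_sub]

lemma integrableOn_exp_primitive_mul (w : ℝ →ᵇ ℝ) (t : ℝ) :
    IntegrableOn (fun s => exp (A.primitive s) * A.p s * w s) (Iic t) := by
  refine IntegrableOn.congr_fun ((A.integrableOn_kernel_mul w t).const_mul
    (exp (A.primitive t))) (fun s _ => ?_) measurableSet_Iic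
  rw [← mul_assoc, exp_primitive_mul_kernel]

lemma exp_primitive_mul_volterra (w : ℝ →ᵇ ℝ) (t : ℝ) :
    exp (A.primitive t) * A.volterra w t = ∫ s in Iic t, exp (A.primitive s) * A.p s * w s := by
  rw [volterra, ← integral_const_mul]
  exact setIntegral_congr_fun measurableSet_Iic fun s _ => by
    rw [← mul_assoc, exp_primitive_mul_kernel]

lemma continuous_volterra (w : ℝ →ᵇ ℝ) : Continuous (A.volterra w) := by
  have h : A.volterra w = fun t =>
      exp (-A.primitive t) * ∫ s in Iic t, exp (A.primitive s) * A.p s * w s := by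
    funext t
    rw [← exp_primitive_mul_volterra, ← mul_assoc, ← exp_add, neg_add_cancel, exp_zero, one_mul]
  rw [h]
  exact (continuous_exp.comp A.continuous_primitive.neg).mul
    (continuous_integral_Iic (A.integrableOn_exp_primitive_mul w))

def volterraBCF (w : ℝ →ᵇ ℝ) : ℝ →ᵇ ℝ :=
  .ofNormedAddCommGroup (A.volterra w) (A.continuous_volterra w) (S.K * ‖w‖)
    (A.abs_volterra_le w)

@[simp]
lemma volterraBCF_apply (w : ℝ →ᵇ ℝ) (t : ℝ) : A.volterraBCF w t = A.volterra w t := rfl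

lemma lipschitzWith_volterraBCF : LipschitzWith S.K A.volterraBCF :=
  LipschitzWith.of_dist_le_mul fun w v => (dist_le (by positivity)).2 fun t => by
    rw [volterraBCF_apply, volterraBCF_apply, Real.dist_eq, volterra_sub, dist_eq_norm]
    exact A.abs_volterra_le _ t

def op (u : ℝ →ᵇ ℝ) : ℝ →ᵇ ℝ := A.volterraBCF (S.delayTerm u)

lemma contractingWith_op : ContractingWith (S.K * S.γ) A.op :=
  ⟨S.K_mul_γ_lt_one, A.lipschitzWith_volterraBCF.comp S.lipschitzWith_delayTerm⟩

lemma norm_op_le (u : ℝ →ᵇ ℝ) : ‖A.op u‖ ≤ S.K * (|S.g 0| + S.γ * ‖u‖) :=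
  (norm_le (by positivity)).2 fun t =>
    (A.abs_volterra_le _ t).trans (by gcongr; exact S.norm_delayTerm_le u)

lemma norm_op_iterate_zero_le (k : ℕ) :
    ‖A.op^[k] 0‖ ≤ S.K * |S.g 0| / (1 - S.K * S.γ) := by
  have hq : (S.K : ℝ) * S.γ < 1 := by exact_mod_cast S.K_mul_γ_lt_one
  induction k with
  | zero => simpa using div_nonneg (by positivity) (sub_pos.2 hq).le
  | succ k ih =>
    rw [Function.iterate_succ_apply']
    calc _ ≤ S.K * (|S.g 0| + S.γ * (S.K * |S.g 0| / (1 - S.K * S.γ))) :=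
          (A.norm_op_le _).trans (by gcongr)
      _ = S.K * |S.g 0| / (1 - S.K * S.γ) := by
          field_simp [(sub_pos.2 hq).ne']
          ring

def sol : ℝ →ᵇ ℝ := ContractingWith.fixedPoint A.op A.contractingWith_op

lemma op_sol : A.op A.sol = A.sol := A.contractingWith_op.fixedPoint_isFixedPt

lemma eq_sol_of_op_eq {u : ℝ →ᵇ ℝ} (hu : A.op u = u) : u = A.sol :=
  A.contractingWith_op.fixedPoint_unique hu

lemma hasDerivAt_sol {t : ℝ} (hδ : ContinuousAt A.δ t) (hp : ContinuousAt A.p t) :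
    HasDerivAt A.sol (-A.δ t * A.sol t + A.p t * S.g (A.sol (t - S.τ))) t := by
  have hF := hasDerivAt_integral_Iic (A.integrableOn_exp_primitive_mul (S.delayTerm A.sol))
    (((continuous_exp.comp A.continuous_primitive).continuousAt.mul hp).mul
      (S.delayTerm A.sol).continuous.continuousAt)
  rw [← hasDerivAt_exp_mul_iff (A.hasDerivAt_primitive hδ)]
  refine (hF.congr_of_eventuallyEq (Eventually.of_forall fun s => ?_)).congr_deriv ?_
  · dsimp only
    rw [← exp_primitive_mul_volterra]
    conv_lhs => rw [← A.op_sol]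
    rfl
  · simp [mul_assoc]

/-- A bounded solution `y` satisfies `(e^{∫₀ δ} y)' = e^{∫₀ δ} p g(y(· - τ))`, and `e^{∫₀ δ} y`
vanishes at `-∞`, so integrating over `(-∞, t]` shows that `y` is a fixed point of `op`. -/
lemma eq_sol_of_hasDerivAt (hδ : Continuous A.δ) {y : ℝ → ℝ} (hyb : ∃ C, ∀ t, |y t| ≤ C)
    (hy : ∀ t, HasDerivAt y (-A.δ t * y t + A.p t * S.g (y (t - S.τ))) t) : y = A.sol := by
  obtain ⟨C, hC⟩ := hyb
  let u : ℝ →ᵇ ℝ := .ofNormedAddCommGroup y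
    (continuous_iff_continuousAt.2 fun t => (hy t).continuousAt) C hC
  have hZ : ∀ t, HasDerivAt (fun s => exp (A.primitive s) * y s)
      (exp (A.primitive t) * A.p t * S.delayTerm u t) t := fun t => by
    rw [mul_assoc]
    exact (hasDerivAt_exp_mul_iff (A.hasDerivAt_primitive hδ.continuousAt)).2 (hy t)
  have hZ0 : Tendsto (fun s => exp (A.primitive s) * y s) atBot (𝓝 0) :=
    A.tendsto_exp_primitive_atBot.zero_mul_isBoundedUnder_le ⟨C, eventually_map.2 <|
      Eventually.of_forall hC⟩
  have hop : A.op u = u := by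
    ext t
    have h := integral_Iic_of_hasDerivAt_of_tendsto' (fun s _ => hZ s)
      (A.integrableOn_exp_primitive_mul _ t) hZ0
    rw [sub_zero, ← exp_primitive_mul_volterra] at h
    exact mul_left_cancel₀ (exp_pos _).ne' h
  exact congrArg DFunLike.coe (A.eq_sol_of_op_eq hop)

def shift (c : ℝ) : S.Coeffs where
  δ t := A.δ (t + c)
  p t := A.p (t + c)
  measurable_δ := A.measurable_δ.comp (measurable_add_const c)
  measurable_p := A.measurable_p.comp (measurable_add_const c)
  abs_δ_le t := A.abs_δ_le (t + c)
  abs_p_le t := A.abs_p_le (t + c)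
  integral_δ_ge s t h := by
    rw [intervalIntegral.integral_comp_add_right A.δ c]
    convert A.integral_δ_ge (s + c) (t + c) (by linarith) using 2
    ring

lemma primitive_shift (c t : ℝ) :
    (A.shift c).primitive t = A.primitive (t + c) - A.primitive c := by
  rw [A.primitive_sub_primitive]
  exact (intervalIntegral.integral_comp_add_right A.δ c).trans (by rw [zero_add])

lemma kernel_shift (c t s : ℝ) : (A.shift c).kernel t s = A.kernel (t + c) (s + c) := by
  rw [kernel, kernel, primitive_shift, primitive_shift, sub_sub_sub_cancel_right]
  rfl

lemma volterra_shift (c : ℝ) (w : ℝ → ℝ) (t : ℝ) :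
    (A.shift c).volterra (fun s => w (s + c)) t = A.volterra w (t + c) := by
  simp only [volterra, kernel_shift]
  exact setIntegral_Iic_comp_add_right (fun s => A.kernel (t + c) s * w s) t c

lemma sol_shift (c t : ℝ) : (A.shift c).sol t = A.sol (t + c) := by
  let w : ℝ →ᵇ ℝ := A.sol.compContinuous ⟨fun t => t + c, by fun_prop⟩
  have hw : (A.shift c).op w = w := by
    ext t
    have h : (A.shift c).op w t = (A.shift c).volterra (fun s => S.delayTerm A.sol (s + c)) t := by
      rw [op, volterraBCF_apply]
      congr 1
      funext s
      simp [w, sub_add_eq_add_sub]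
    rw [h, volterra_shift, ← volterraBCF_apply, ← op, op_sol]
    rfl
  rw [← (A.shift c).eq_sol_of_op_eq hw]
  rfl

end

variable {S}

def ofTendsto (A : ℕ → S.Coeffs) (δ p : ℝ → ℝ)
    (hδ : ∀ t, Tendsto (fun n => (A n).δ t) atTop (𝓝 (δ t)))
    (hp : ∀ t, Tendsto (fun n => (A n).p t) atTop (𝓝 (p t))) : S.Coeffs where
  δ := δ
  p := p
  measurable_δ := measurable_of_tendsto_metrizable (fun n => (A n).measurable_δ)
    (tendsto_pi_nhds.2 hδ)
  measurable_p := measurable_of_tendsto_metrizable (fun n => (A n).measurable_p)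
    (tendsto_pi_nhds.2 hp)
  abs_δ_le t := le_of_tendsto' (hδ t).abs fun n => (A n).abs_δ_le t
  abs_p_le t := le_of_tendsto' (hp t).abs fun n => (A n).abs_p_le t
  integral_δ_ge s t h := ge_of_tendsto'
    (tendsto_intervalIntegral_of_tendsto (fun n => (A n).measurable_δ)
      (fun n => (A n).abs_δ_le) hδ s t) fun n => (A n).integral_δ_ge s t h

lemma tendsto_kernel {A : ℕ → S.Coeffs} {B : S.Coeffs}
    (hδ : ∀ t, Tendsto (fun n => (A n).δ t) atTop (𝓝 (B.δ t)))
    (hp : ∀ t, Tendsto (fun n => (A n).p t) atTop (𝓝 (B.p t))) (t s : ℝ) :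
    Tendsto (fun n => (A n).kernel t s) atTop (𝓝 (B.kernel t s)) := by
  have hD := tendsto_intervalIntegral_of_tendsto (fun n => (A n).measurable_δ)
    (fun n => (A n).abs_δ_le) hδ 0
  exact ((continuous_exp.tendsto _).comp ((hD s).sub (hD t))).mul (hp s)

lemma tendsto_volterra {A : ℕ → S.Coeffs} {B : S.Coeffs}
    (hδ : ∀ t, Tendsto (fun n => (A n).δ t) atTop (𝓝 (B.δ t)))
    (hp : ∀ t, Tendsto (fun n => (A n).p t) atTop (𝓝 (B.p t))) {w : ℕ → ℝ →ᵇ ℝ}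
    {v : ℝ →ᵇ ℝ} {R : ℝ} (hwR : ∀ n, ‖w n‖ ≤ R)
    (hwv : ∀ s, Tendsto (fun n => w n s) atTop (𝓝 (v s))) (t : ℝ) :
    Tendsto (fun n => (A n).volterra (w n) t) atTop (𝓝 (B.volterra v t)) := by
  refine tendsto_integral_of_dominated_convergence
    (fun s => S.Bp * exp S.b * R * exp (S.a * (s - t)))
    (fun n => ((A n).integrableOn_kernel_mul (w n) t).aestronglyMeasurable)
    ((integrableOn_exp_mul_sub_Iic S.a_pos t).const_mul _) (fun n => ?_)
    (ae_of_all _ fun s => (tendsto_kernel hδ hp t s).mul (hwv s))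
  refine (ae_restrict_iff' measurableSet_Iic).2 (ae_of_all _ fun s hs => ?_)
  exact ((A n).abs_kernel_mul_le (w n) hs).trans (by gcongr; exact hwR n)

lemma tendsto_op_iterate {A : ℕ → S.Coeffs} {B : S.Coeffs}
    (hδ : ∀ t, Tendsto (fun n => (A n).δ t) atTop (𝓝 (B.δ t)))
    (hp : ∀ t, Tendsto (fun n => (A n).p t) atTop (𝓝 (B.p t))) (k : ℕ) (t : ℝ) :
    Tendsto (fun n => (A n).op^[k] 0 t) atTop (𝓝 (B.op^[k] 0 t)) := by
  induction k generalizing t with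
  | zero => exact tendsto_const_nhds
  | succ k ih =>
    have hR : ∀ n, ‖S.delayTerm ((A n).op^[k] 0)‖ ≤
        |S.g 0| + S.γ * (S.K * |S.g 0| / (1 - S.K * S.γ)) := fun n =>
      (S.norm_delayTerm_le _).trans (by gcongr; exact (A n).norm_op_iterate_zero_le k)
    simp only [Function.iterate_succ_apply']
    exact tendsto_volterra hδ hp (v := S.delayTerm (B.op^[k] 0)) hR
      (fun s => (S.lipschitzWith_g.continuous.tendsto _).comp (ih (s - S.τ))) t

lemma tendsto_sol {A : ℕ → S.Coeffs} {B : S.Coeffs}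
    (hδ : ∀ t, Tendsto (fun n => (A n).δ t) atTop (𝓝 (B.δ t)))
    (hp : ∀ t, Tendsto (fun n => (A n).p t) atTop (𝓝 (B.p t))) (t : ℝ) :
    Tendsto (fun n => (A n).sol t) atTop (𝓝 (B.sol t)) := by
  have hC : ∀ C : S.Coeffs, dist 0 (C.op 0) ≤ S.K * |S.g 0| := fun C => by
    simpa [dist_zero_left] using C.norm_op_le 0
  exact ContractingWith.tendsto_fixedPoint_apply (fun n => (A n).contractingWith_op)
    B.contractingWith_op (fun n => hC (A n)) (hC B) (tendsto_op_iterate hδ hp) t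

theorem almostAutomorphic_sol (A : S.Coeffs) (hδ : AlmostAutomorphic A.δ)
    (hp : AlmostAutomorphic A.p) : AlmostAutomorphic A.sol := by
  refine ⟨A.sol.continuous, fun σ => ?_⟩
  obtain ⟨k₁, hk₁, δ', hδ₁, hδ₂⟩ := hδ.2 σ
  obtain ⟨k₂, hk₂, p', hp₁, hp₂⟩ := hp.2 (σ ∘ k₁)
  set c : ℕ → ℝ := fun n => σ (k₁ (k₂ n))
  have hδc : ∀ t, Tendsto (fun n => (A.shift (c n)).δ t) atTop (𝓝 (δ' t)) :=
    fun t => (hδ₁ t).comp hk₂.tendsto_atTop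
  let L := ofTendsto (fun n => A.shift (c n)) δ' p' hδc hp₁
  refine ⟨k₁ ∘ k₂, hk₁.comp hk₂, L.sol, fun t => ?_, fun t => ?_⟩
  · exact (tendsto_sol (B := L) hδc hp₁ t).congr fun n => A.sol_shift (c n) t
  · have hδL : ∀ s, Tendsto (fun n => (L.shift (-c n)).δ s) atTop (𝓝 (A.δ s)) := fun s =>
      ((hδ₂ s).comp hk₂.tendsto_atTop).congr fun n => congrArg δ' (sub_eq_add_neg _ _)
    have hpL : ∀ s, Tendsto (fun n => (L.shift (-c n)).p s) atTop (𝓝 (A.p s)) := fun s =>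
      (hp₂ s).congr fun n => congrArg p' (sub_eq_add_neg _ _)
    exact (tendsto_sol hδL hpL t).congr fun n =>
      (L.sol_shift (-c n) t).trans (congrArg L.sol (sub_eq_add_neg t (c n)).symm)

end Coeffs

end DelaySetup

end

theorem delayed_lasota_wazewska_type_unique_almost_automorphic_solution_general
    (δ p : ℝ → ℝ)
    (hδc : Continuous δ) (hδb : ∃ C, ∀ t, |δ t| ≤ C) (hδaa : AlmostAutomorphic δ)
    (hpc : Continuous p) (hpb : ∃ C, ∀ t, |p t| ≤ C) (hpaa : AlmostAutomorphic p)
    (M : ℝ) (hM : ErgodicMeanR δ M) (hMpos : 0 < M)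
    (τ : ℝ) :
    ∃ γ₀ > (0 : ℝ), ∀ (g : ℝ → ℝ) (γ : NNReal),
      (∀ x : ℝ, 0 ≤ g x) → LipschitzWith γ g → (γ : ℝ) ≤ γ₀ →
      ∃! y : ℝ → ℝ,
        AlmostAutomorphic y ∧
        (∃ C, ∀ t : ℝ, |y t| ≤ C) ∧
        (∀ t : ℝ, HasDerivAt y (-δ t * y t + p t * g (y (t - τ))) t) := by
  obtain ⟨Bδ, hBδ⟩ := hδb
  obtain ⟨Bp, hBp⟩ := hpb
  obtain ⟨b, hb⟩ := hM.exists_integral_ge hBδ (half_lt_self hMpos)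
  have hBp0 : 0 ≤ Bp := (abs_nonneg _).trans (hBp 0)
  set K : ℝ := Bp * exp b / (M / 2)
  have hK : 0 ≤ K := by positivity
  refine ⟨(K + 1)⁻¹, by positivity, fun g γ _ hg hγ => ?_⟩
  let S : DelaySetup :=
    { a := M / 2, b := b, Bδ := Bδ, Bp := ⟨Bp, hBp0⟩, τ := τ, g := g, γ := γ
      a_pos := half_pos hMpos, lipschitzWith_g := hg
      contraction := calc
        K * γ ≤ K * (K + 1)⁻¹ := by gcongr
        _ < 1 := by rw [mul_inv_lt_iff₀ (by positivity)]; linarith }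
  let A : S.Coeffs := ⟨δ, p, hδc.measurable, hpc.measurable, hBδ, hBp, hb⟩
  refine ⟨A.sol, ⟨A.almostAutomorphic_sol hδaa hpaa, ⟨‖A.sol‖, fun t => A.sol.norm_coe_le_norm t⟩,
    fun t => A.hasDerivAt_sol hδc.continuousAt hpc.continuousAt⟩,
    fun y ⟨_, hyb, hy⟩ => A.eq_sol_of_hasDerivAt hδc hyb hy⟩

theorem delayed_lasota_wazewska_type_unique_almost_automorphic_solution
    (δ p : ℝ → ℝ)
    (hδc : Continuous δ) (hδb : ∃ C, ∀ t, |δ t| ≤ C) (hδaa : AlmostAutomorphic δ)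
    (hpc : Continuous p) (hpb : ∃ C, ∀ t, |p t| ≤ C) (hpaa : AlmostAutomorphic p)
    (hδpos : ∀ t : ℝ, 0 < δ t) (hppos : ∀ t : ℝ, 0 < p t)
    (M : ℝ) (hM : ErgodicMeanR δ M) (hMpos : 0 < M)
    (τ : ℝ) (hτ : 0 < τ) :
    ∃ γ₀ > (0 : ℝ), ∀ (g : ℝ → ℝ) (γ : NNReal),
      (∀ x : ℝ, 0 ≤ g x) → LipschitzWith γ g → (γ : ℝ) ≤ γ₀ →
      ∃! y : ℝ → ℝ,
        AlmostAutomorphic y ∧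
        (∃ C, ∀ t : ℝ, |y t| ≤ C) ∧
        (∀ t : ℝ, HasDerivAt y (-δ t * y t + p t * g (y (t - τ))) t) :=
  delayed_lasota_wazewska_type_unique_almost_automorphic_solution_general δ p hδc hδb hδaa hpc hpb
    hpaa M hM hMpos τ
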